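/- arXiv:2409.01296 — 2 statements merged into one kernel-verified Lean document; each statement's English description precedes it below -/
import Mathlib

section
/- Let S^F_n = F_{n+2} − 1 denote the sum of the first n Fibonacci numbers, and for n ≥ 1 let m_n denote the largest index m such that F_m divides S^F_n. Then: for every k ≥ 0, m_{4k+1} = 2k+2 (i.e., F_{2k+2} divides F_{4k+3} − 1 and F_m does not divide F_{4k+3} − 1 for any m > 2k+2); for every k ≥ 0, m_{4k+2} = 2k+3; for every k ≥ 1, m_{4k+3} = 2k+2; and for every k ≥ 0, m_{4k+4} = 2k+2. Moreover the corresponding quotients are Lucas numbers: S^F_{4k+1} = F_{2k+2}·L_{2k+1}, S^F_{4k+2} = F_{2k+3}·L_{2k+1}, S^F_{4k+3} = F_{2k+2}·L_{2k+3}, and S^F_{4k+4} = F_{2k+2}·L_{2k+4}. -/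
/-- The Lucas numbers: L 0 = 2, L 1 = 1, L (n+2) = L (n+1) + L n. -/
def lucas : ℕ → ℕ
  | 0 => 2
  | 1 => 1
  | n + 2 => lucas n + lucas (n + 1)

private lemma lucas_eq : ∀ n : ℕ, lucas (n+1) = Nat.fib n + Nat.fib (n+2)
  | 0 => rfl
  | 1 => rfl
  | n+2 => by
      have h1 := lucas_eq n
      have h2 : lucas (n+2) = Nat.fib (n+1) + Nat.fib (n+3) := lucas_eq (n+1)
      have e2 : Nat.fib (n+2) = Nat.fib n + Nat.fib (n+1) := Nat.fib_add_two
      have e4 : Nat.fib (n+4) = Nat.fib (n+2) + Nat.fib (n+3) := Nat.fib_add_two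
      show lucas (n+1) + lucas (n+2) = Nat.fib (n+2) + Nat.fib (n+4)
      omega

private lemma cat (n : ℕ) : (Nat.fib n : ℤ) * Nat.fib (n+2) = (Nat.fib (n+1):ℤ)^2 - (-1)^n := by
  induction n with
  | zero => simp
  | succ n ih =>
    have h : (Nat.fib (n+3) : ℤ) = Nat.fib (n+1) + Nat.fib (n+2) := by
      exact_mod_cast congrArg (Nat.cast : ℕ → ℤ) (Nat.fib_add_two (n := n+1))
    have h2 : (Nat.fib (n+2) : ℤ) = Nat.fib n + Nat.fib (n+1) := by
      exact_mod_cast congrArg (Nat.cast : ℕ → ℤ) (Nat.fib_add_two (n := n))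
    rw [show n+1+2 = n+3 from rfl, show n+1+1 = n+2 from rfl]
    linear_combination -ih + (Nat.fib (n+1):ℤ) * h - (Nat.fib (n+2):ℤ) * h2

private lemma catE (k : ℕ) : (Nat.fib (2*k) : ℤ) * Nat.fib (2*k+2) = (Nat.fib (2*k+1):ℤ)^2 - 1 := by
  have := cat (2*k)
  rw [show ((-1:ℤ))^(2*k) = 1 by rw [pow_mul]; norm_num] at this
  exact this

private lemma fibz (n : ℕ) : (Nat.fib (n+2) : ℤ) = Nat.fib n + Nat.fib (n+1) := by
  exact_mod_cast congrArg (Nat.cast : ℕ → ℤ) (Nat.fib_add_two (n := n))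

private lemma id1 (k : ℕ) : Nat.fib (4*k+3) = Nat.fib (2*k+2) * lucas (2*k+1) + 1 := by
  have hA := Nat.fib_add (2*k+1) (2*k+1)
  rw [show 2*k+1+(2*k+1)+1 = 4*k+3 by ring, show 2*k+1+1 = 2*k+2 from rfl] at hA
  have hAz : (Nat.fib (4*k+3) : ℤ) =
      (Nat.fib (2*k+1):ℤ) * Nat.fib (2*k+1) + (Nat.fib (2*k+2):ℤ) * Nat.fib (2*k+2) := by
    exact_mod_cast congrArg (Nat.cast : ℕ → ℤ) hA
  rw [lucas_eq (2*k)]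
  have := catE k
  zify
  linear_combination hAz - catE k

private lemma id2 (k : ℕ) : Nat.fib (4*k+4) = Nat.fib (2*k+3) * lucas (2*k+1) + 1 := by
  have hA := Nat.fib_add (2*k+1) (2*k+2)
  rw [show 2*k+1+(2*k+2)+1 = 4*k+4 by ring, show 2*k+1+1 = 2*k+2 from rfl,
    show 2*k+2+1 = 2*k+3 from rfl] at hA
  have hAz : (Nat.fib (4*k+4) : ℤ) =
      (Nat.fib (2*k+1):ℤ) * Nat.fib (2*k+2) + (Nat.fib (2*k+2):ℤ) * Nat.fib (2*k+3) := by
    exact_mod_cast congrArg (Nat.cast : ℕ → ℤ) hA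
  rw [lucas_eq (2*k)]
  zify
  linear_combination hAz + (Nat.fib (2*k+1):ℤ) * fibz (2*k) - (Nat.fib (2*k):ℤ) * fibz (2*k+1)
    - catE k

private lemma id3 (k : ℕ) : Nat.fib (4*k+5) = Nat.fib (2*k+2) * lucas (2*k+3) + 1 := by
  have hA := Nat.fib_add (2*k+2) (2*k+2)
  rw [show 2*k+2+(2*k+2)+1 = 4*k+5 by ring, show 2*k+2+1 = 2*k+3 from rfl] at hA
  have hAz : (Nat.fib (4*k+5) : ℤ) =
      (Nat.fib (2*k+2):ℤ) * Nat.fib (2*k+2) + (Nat.fib (2*k+3):ℤ) * Nat.fib (2*k+3) := by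
    exact_mod_cast congrArg (Nat.cast : ℕ → ℤ) hA
  rw [lucas_eq (2*k+2)]
  have hcat2 := catE (k+1)
  rw [show 2*(k+1) = 2*k+2 by ring, show 2*k+2+2 = 2*k+4 from rfl,
    show 2*k+2+1 = 2*k+3 from rfl] at hcat2
  zify
  linear_combination hAz - hcat2

private lemma id4 (k : ℕ) : Nat.fib (4*k+6) = Nat.fib (2*k+2) * lucas (2*k+4) + 1 := by
  have hA := Nat.fib_add (2*k+2) (2*k+3)
  rw [show 2*k+2+(2*k+3)+1 = 4*k+6 by ring, show 2*k+2+1 = 2*k+3 from rfl,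
    show 2*k+3+1 = 2*k+4 from rfl] at hA
  have hAz : (Nat.fib (4*k+6) : ℤ) =
      (Nat.fib (2*k+2):ℤ) * Nat.fib (2*k+3) + (Nat.fib (2*k+3):ℤ) * Nat.fib (2*k+4) := by
    exact_mod_cast congrArg (Nat.cast : ℕ → ℤ) hA
  rw [lucas_eq (2*k+3)]
  have hcat2 := catE (k+1)
  rw [show 2*(k+1) = 2*k+2 by ring, show 2*k+2+2 = 2*k+4 from rfl,
    show 2*k+2+1 = 2*k+3 from rfl] at hcat2
  zify
  linear_combination hAz - (Nat.fib (2*k+2):ℤ) * fibz (2*k+3) + (Nat.fib (2*k+3):ℤ) * fibz (2*k+2)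
    - hcat2

private lemma fib_eq_cases (a b : ℕ) (ha : 1 ≤ a) (hb : 1 ≤ b) (h : Nat.fib a = Nat.fib b) :
    a = b ∨ (a ≤ 2 ∧ b ≤ 2) := by
  rcases le_or_gt a 2 with h2 | h2
  · rcases le_or_gt b 2 with h3 | h3
    · exact Or.inr ⟨h2, h3⟩
    · exfalso
      have hb2 : Nat.fib 3 ≤ Nat.fib b := Nat.fib_mono h3
      have : Nat.fib a = 1 := by interval_cases a <;> rfl
      have h4 : (2:ℕ) ≤ Nat.fib b := le_trans (by decide) hb2
      omega
  · rcases le_or_gt b 2 with h3 | h3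
    · exfalso
      have hb2 : Nat.fib 3 ≤ Nat.fib a := Nat.fib_mono h2
      have : Nat.fib b = 1 := by interval_cases b <;> rfl
      have h4 : (2:ℕ) ≤ Nat.fib a := le_trans (by decide) hb2
      omega
    · exact Or.inl (Nat.fib_strictMonoOn.injOn (by simp; omega) (by simp; omega) h)

private lemma key (m r : ℕ) (hm : 3 ≤ m) (hr1 : 1 ≤ r) (hrm : r ≤ m)
    (h : Nat.fib m ∣ Nat.fib (m + r) - 1) :
    (m % 2 = 0 ∧ Nat.fib r = Nat.fib (m-1)) ∨ (m % 2 = 1 ∧ Nat.fib r = Nat.fib (m-2)) := by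
  obtain ⟨a, rfl⟩ : ∃ a, m = a + 3 := ⟨m - 3, by omega⟩
  obtain ⟨s, rfl⟩ : ∃ s, r = s + 1 := ⟨r - 1, by omega⟩
  -- basic facts
  have hf2 : 2 ≤ Nat.fib (a+3) := by
    have : Nat.fib 3 ≤ Nat.fib (a+3) := Nat.fib_mono (by omega)
    simpa [Nat.fib] using this
  have hfm1 : 0 < Nat.fib (a+2) := Nat.fib_pos.mpr (by omega)
  have hfm1lt : Nat.fib (a+2) < Nat.fib (a+3) := Nat.fib_lt_fib_succ (by omega)
  have hfr : 0 < Nat.fib (s+1) := Nat.fib_pos.mpr (by omega)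
  have hfrle : Nat.fib (s+1) ≤ Nat.fib (a+3) := Nat.fib_mono (by omega)
  have hrec : Nat.fib (a+3) = Nat.fib (a+1) + Nat.fib (a+2) := Nat.fib_add_two
  -- cast the divisibility
  have h1 : 1 ≤ Nat.fib (a+3+(s+1)) := Nat.fib_pos.mpr (by omega)
  zify [h1] at h
  obtain ⟨c, hc⟩ := h
  -- addition formula
  have hA := Nat.fib_add (a+3) s
  rw [show a+3+s+1 = a+3+(s+1) by ring, show a+3+1 = a+4 from rfl] at hA
  have hAz : (Nat.fib (a+3+(s+1)) : ℤ) =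
      (Nat.fib (a+3):ℤ) * Nat.fib s + (Nat.fib (a+4):ℤ) * Nat.fib (s+1) := by
    exact_mod_cast congrArg (Nat.cast : ℕ → ℤ) hA
  -- Catalan
  have hcat := cat (a+2)
  rw [show a+2+2 = a+4 from rfl, show a+2+1 = a+3 from rfl] at hcat
  rcases Nat.even_or_odd a with he | ho
  · -- a even, m = a+3 odd
    right
    have hsgn : ((-1:ℤ))^(a+2) = 1 := (he.add even_two).neg_one_pow
    rw [hsgn] at hcat
    have hdvd : (Nat.fib (a+3) : ℤ) ∣ (Nat.fib (s+1) : ℤ) + Nat.fib (a+2) := by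
      refine ⟨(Nat.fib (a+3):ℤ) * Nat.fib (s+1) - Nat.fib (a+2) * (c - Nat.fib s), ?_⟩
      linear_combination (-(Nat.fib (a+2):ℤ)) * hc + (Nat.fib (a+2):ℤ) * hAz +
        (Nat.fib (s+1):ℤ) * hcat
    have hdn : Nat.fib (a+3) ∣ Nat.fib (s+1) + Nat.fib (a+2) := by exact_mod_cast hdvd
    obtain ⟨t, ht⟩ := hdn
    have ht1 : t = 1 := by
      have htne : t ≠ 0 := by rintro rfl; omega
      have hlt2 : Nat.fib (a+3) * t < Nat.fib (a+3) * 2 := by omega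
      have := Nat.lt_of_mul_lt_mul_left hlt2
      omega
    subst ht1
    have hpar := Nat.even_iff.mp he
    refine ⟨by omega, ?_⟩
    rw [show a+3-2 = a+1 by omega]
    omega
  · -- a odd, m = a+3 even
    left
    have hsgn : ((-1:ℤ))^(a+2) = -1 := (ho.add_even even_two).neg_one_pow
    rw [hsgn] at hcat
    have hdvd : (Nat.fib (a+3) : ℤ) ∣ (Nat.fib (s+1) : ℤ) - Nat.fib (a+2) := by
      refine ⟨(Nat.fib (a+2):ℤ) * (c - Nat.fib s) - (Nat.fib (a+3):ℤ) * Nat.fib (s+1), ?_⟩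
      linear_combination (Nat.fib (a+2):ℤ) * hc - (Nat.fib (a+2):ℤ) * hAz -
        (Nat.fib (s+1):ℤ) * hcat
    have h0 : (Nat.fib (s+1) : ℤ) - Nat.fib (a+2) = 0 := by
      refine Int.eq_zero_of_abs_lt_dvd hdvd ?_
      rw [abs_lt]
      constructor
      · omega
      · omega
    have hpar := Nat.odd_iff.mp ho
    refine ⟨by omega, ?_⟩
    rw [show a+3-1 = a+2 by omega]
    omega

/-- The largest index m such that F_m divides the Fibonacci partial sum
`S^F_n = F_{n+2} - 1`: it is 2k+2 for n = 4k+1, 2k+3 for n = 4k+2,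
2k+2 for n = 4k+3 (k ≥ 1; n = 3 is an exception), and 2k+2 for n = 4k+4;
moreover the corresponding quotients are Lucas numbers. -/
theorem fib_partial_sum_max_index :
    (∀ k : ℕ,
      Nat.fib (2 * k + 2) ∣ Nat.fib (4 * k + 3) - 1 ∧
      (∀ m : ℕ, 2 * k + 2 < m → ¬ Nat.fib m ∣ Nat.fib (4 * k + 3) - 1) ∧
      Nat.fib (4 * k + 3) - 1 = Nat.fib (2 * k + 2) * lucas (2 * k + 1)) ∧
    (∀ k : ℕ,
      Nat.fib (2 * k + 3) ∣ Nat.fib (4 * k + 4) - 1 ∧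
      (∀ m : ℕ, 2 * k + 3 < m → ¬ Nat.fib m ∣ Nat.fib (4 * k + 4) - 1) ∧
      Nat.fib (4 * k + 4) - 1 = Nat.fib (2 * k + 3) * lucas (2 * k + 1)) ∧
    (∀ k : ℕ, 1 ≤ k →
      Nat.fib (2 * k + 2) ∣ Nat.fib (4 * k + 5) - 1 ∧
      (∀ m : ℕ, 2 * k + 2 < m → ¬ Nat.fib m ∣ Nat.fib (4 * k + 5) - 1)) ∧
    (∀ k : ℕ,
      Nat.fib (4 * k + 5) - 1 = Nat.fib (2 * k + 2) * lucas (2 * k + 3)) ∧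
    (∀ k : ℕ,
      Nat.fib (2 * k + 2) ∣ Nat.fib (4 * k + 6) - 1 ∧
      (∀ m : ℕ, 2 * k + 2 < m → ¬ Nat.fib m ∣ Nat.fib (4 * k + 6) - 1) ∧
      Nat.fib (4 * k + 6) - 1 = Nat.fib (2 * k + 2) * lucas (2 * k + 4)) := by
  refine ⟨?_, ?_, ?_, ?_, ?_⟩
  · -- n = 4k+1
    intro k
    have hid := id1 k
    have hNfib : 2 ≤ Nat.fib (4*k+3) := le_trans (by decide) (Nat.fib_mono (show 3 ≤ 4*k+3 by omega))
    refine ⟨⟨lucas (2*k+1), by omega⟩, ?_, by omega⟩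
    intro m hm hd
    rcases le_or_gt (4*k+3) m with hge | hlt
    · have h1 : Nat.fib (4*k+3) ≤ Nat.fib m := Nat.fib_mono hge
      have h2 := Nat.le_of_dvd (by omega) hd
      omega
    · have hmr : m + (4*k+3-m) = 4*k+3 := by omega
      have hkey := key m (4*k+3-m) (by omega) (by omega) (by omega) (by rw [hmr]; exact hd)
      rcases hkey with ⟨hp, hq⟩ | ⟨hp, hq⟩
      · have hlt1 : Nat.fib (4*k+3-m) ≤ Nat.fib (m-2) := Nat.fib_mono (by omega)
        have hlt2 : Nat.fib (m-2) < Nat.fib (m-1) := by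
          have := Nat.fib_lt_fib_succ (n := m-2) (by omega)
          rwa [show m-2+1 = m-1 by omega] at this
        omega
      · rcases fib_eq_cases _ _ (by omega) (by omega) hq with h | h <;> omega
  · -- n = 4k+2
    intro k
    have hid := id2 k
    have hNfib : 2 ≤ Nat.fib (4*k+4) := le_trans (by decide) (Nat.fib_mono (show 3 ≤ 4*k+4 by omega))
    refine ⟨⟨lucas (2*k+1), by omega⟩, ?_, by omega⟩
    intro m hm hd
    rcases le_or_gt (4*k+4) m with hge | hlt
    · have h1 : Nat.fib (4*k+4) ≤ Nat.fib m := Nat.fib_mono hge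
      have h2 := Nat.le_of_dvd (by omega) hd
      omega
    · have hmr : m + (4*k+4-m) = 4*k+4 := by omega
      have hkey := key m (4*k+4-m) (by omega) (by omega) (by omega) (by rw [hmr]; exact hd)
      rcases hkey with ⟨hp, hq⟩ | ⟨hp, hq⟩
      · have hlt1 : Nat.fib (4*k+4-m) ≤ Nat.fib (m-2) := Nat.fib_mono (by omega)
        have hlt2 : Nat.fib (m-2) < Nat.fib (m-1) := by
          have := Nat.fib_lt_fib_succ (n := m-2) (by omega)
          rwa [show m-2+1 = m-1 by omega] at this
        omega
      · rcases fib_eq_cases _ _ (by omega) (by omega) hq with h | h <;> omega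
  · -- n = 4k+3, k ≥ 1
    intro k hk
    have hid := id3 k
    have hNfib : 2 ≤ Nat.fib (4*k+5) := le_trans (by decide) (Nat.fib_mono (show 3 ≤ 4*k+5 by omega))
    refine ⟨⟨lucas (2*k+3), by omega⟩, ?_⟩
    intro m hm hd
    rcases le_or_gt (4*k+5) m with hge | hlt
    · have h1 : Nat.fib (4*k+5) ≤ Nat.fib m := Nat.fib_mono hge
      have h2 := Nat.le_of_dvd (by omega) hd
      omega
    · have hmr : m + (4*k+5-m) = 4*k+5 := by omega
      have hkey := key m (4*k+5-m) (by omega) (by omega) (by omega) (by rw [hmr]; exact hd)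
      rcases hkey with ⟨hp, hq⟩ | ⟨hp, hq⟩
      · have hlt1 : Nat.fib (4*k+5-m) ≤ Nat.fib (m-2) := Nat.fib_mono (by omega)
        have hlt2 : Nat.fib (m-2) < Nat.fib (m-1) := by
          have := Nat.fib_lt_fib_succ (n := m-2) (by omega)
          rwa [show m-2+1 = m-1 by omega] at this
        omega
      · rcases fib_eq_cases _ _ (by omega) (by omega) hq with h | h <;> omega
  · -- quotient identity for n = 4k+3
    intro k
    have hid := id3 k
    have hNfib : 1 ≤ Nat.fib (4*k+5) := Nat.fib_pos.mpr (by omega)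
    omega
  · -- n = 4k+4
    intro k
    have hid := id4 k
    have hNfib : 2 ≤ Nat.fib (4*k+6) := le_trans (by decide) (Nat.fib_mono (show 3 ≤ 4*k+6 by omega))
    refine ⟨⟨lucas (2*k+4), by omega⟩, ?_, by omega⟩
    intro m hm hd
    rcases le_or_gt (4*k+6) m with hge | hlt
    · have h1 : Nat.fib (4*k+6) ≤ Nat.fib m := Nat.fib_mono hge
      have h2 := Nat.le_of_dvd (by omega) hd
      omega
    · have hmr : m + (4*k+6-m) = 4*k+6 := by omega
      have hkey := key m (4*k+6-m) (by omega) (by omega) (by omega) (by rw [hmr]; exact hd)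
      rcases hkey with ⟨hp, hq⟩ | ⟨hp, hq⟩
      · have hlt1 : Nat.fib (4*k+6-m) ≤ Nat.fib (m-2) := Nat.fib_mono (by omega)
        have hlt2 : Nat.fib (m-2) < Nat.fib (m-1) := by
          have := Nat.fib_lt_fib_succ (n := m-2) (by omega)
          rwa [show m-2+1 = m-1 by omega] at this
        omega
      · rcases fib_eq_cases _ _ (by omega) (by omega) hq with h | h <;> omega
end

section
/- Let n and m be natural numbers such that n + 4 ≤ 3m, n ≥ 11, and n − m ≥ 1. Then, as real numbers, |(L_{n+2} − 3)/L_m − L_{n−m+2}| < 1. -/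
/-!
Write `n + 2 = m + k` with `k = n - m + 2`. By Binet's formula `L_j = φ ^ j + ψ ^ j` and `φ ψ = -1`,
`L_{m+k} - L_m L_k = ±L_d` with `d = |m - k|`, and `n + 4 ≤ 3 m` gives `d ≤ m - 2`. Hence
`|L_{n+2} - 3 - L_m L_k| ≤ L_{m-2} + 3 < L_{m-2} + L_{m-1} = L_m`; divide by `L_m`.
-/

open Real goldenRatio

theorem lucas_add_two (n : ℕ) : lucas (n + 2) = lucas n + lucas (n + 1) := rfl

theorem lucas_pos : ∀ n, 0 < lucas n
  | 0 | 1 => by decide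
  | n + 2 => by
    rw [lucas_add_two]
    exact Nat.add_pos_left (lucas_pos n) _

theorem lucas_succ_monotone : Monotone fun n => lucas (n + 1) :=
  monotone_nat_of_le_succ fun n => by
    simp only [lucas_add_two, Nat.le_add_left]

theorem lucas_le_lucas {i j : ℕ} (hij : i ≤ j) (hj : 2 ≤ j) : lucas i ≤ lucas j := by
  obtain ⟨j, rfl⟩ : ∃ j', j = j' + 1 := ⟨j - 1, by omega⟩
  rcases i with _ | i
  · calc lucas 0 ≤ lucas (1 + 1) := by decide
      _ ≤ lucas (j + 1) := lucas_succ_monotone (by omega)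
  · exact lucas_succ_monotone (by omega)

theorem lucas_eq_goldenRatio_pow_add_goldenConj_pow : ∀ n, (lucas n : ℝ) = φ ^ n + ψ ^ n
  | 0 => by norm_num [lucas]
  | 1 => by simp [lucas, goldenRatio_add_goldenConj]
  | n + 2 => by
    rw [lucas_add_two, Nat.cast_add, lucas_eq_goldenRatio_pow_add_goldenConj_pow n,
      lucas_eq_goldenRatio_pow_add_goldenConj_pow (n + 1), pow_add φ n 2, pow_add ψ n 2,
      goldenRatio_sq, goldenConj_sq]
    ring

theorem lucas_add_add (c b : ℕ) :
    (lucas (c + b + b) : ℝ) = lucas (c + b) * lucas b - (-1) ^ b * lucas c := by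
  simp only [lucas_eq_goldenRatio_pow_add_goldenConj_pow, ← goldenRatio_mul_goldenConj]
  generalize φ = x, ψ = y
  ring

theorem abs_lucas_add_sub_lucas_mul (x y : ℕ) :
    |(lucas (x + y) : ℝ) - lucas x * lucas y| = lucas (Nat.dist x y) := by
  have key (c b : ℕ) : |(lucas (c + b + b) : ℝ) - lucas (c + b) * lucas b| = lucas c := by
    rw [lucas_add_add, sub_sub_cancel_left, abs_neg, abs_mul, abs_pow, abs_neg, abs_one,
      one_pow, one_mul, Nat.abs_cast]
  rcases le_total y x with h | h
  · obtain ⟨c, rfl⟩ := Nat.exists_eq_add_of_le' h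
    rw [Nat.dist_eq_sub_of_le_right h, Nat.add_sub_cancel, key]
  · obtain ⟨c, rfl⟩ := Nat.exists_eq_add_of_le' h
    rw [Nat.dist_eq_sub_of_le h, Nat.add_sub_cancel, add_comm x, mul_comm, key]

theorem lucas_add_three_lt {d m : ℕ} (hm : 4 ≤ m) (hd : d + 2 ≤ m) : lucas d + 3 < lucas m := by
  obtain ⟨e, rfl⟩ : ∃ e, m = e + 2 := ⟨m - 2, by omega⟩
  have hde : lucas d ≤ lucas e := lucas_le_lucas (by omega) (by omega)
  have h3e : lucas 3 ≤ lucas (e + 1) := lucas_le_lucas (by omega) (by omega)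
  have : lucas 3 = 4 := rfl
  rw [lucas_add_two]
  omega

/-- If n + 4 ≤ 3m, n ≥ 11 and n - m ≥ 1, then (L_{n+2} - 3)/L_m is within
distance 1 of the Lucas number L_{n-m+2}. -/
theorem lucas_ratio_close_to_lucas (n m : ℕ)
    (h1 : n + 4 ≤ 3 * m) (h2 : 11 ≤ n) (h3 : m + 1 ≤ n) :
    |((lucas (n + 2) : ℝ) - 3) / (lucas m : ℝ) - (lucas (n - m + 2) : ℝ)| < 1 := by
  set k := n - m + 2
  have hE := abs_lucas_add_sub_lucas_mul m k
  rw [show m + k = n + 2 by omega] at hE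
  have hd : Nat.dist m k + 2 ≤ m := by unfold Nat.dist; omega
  have hlt : (lucas (Nat.dist m k) : ℝ) + 3 < lucas m := by
    exact_mod_cast lucas_add_three_lt (by omega) hd
  have hLm : (0 : ℝ) < lucas m := by exact_mod_cast lucas_pos m
  rw [show ((lucas (n + 2) : ℝ) - 3) / lucas m - lucas k
      = ((lucas (n + 2) - lucas m * lucas k) - 3) / lucas m by field_simp; ring,
    abs_div, abs_of_pos hLm, div_lt_one hLm]
  calc |(lucas (n + 2) : ℝ) - lucas m * lucas k - 3|
      ≤ |(lucas (n + 2) : ℝ) - lucas m * lucas k| + |3| := abs_sub _ _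
    _ < lucas m := by rw [hE, abs_of_pos three_pos]; exact hlt
end
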